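/- arXiv:2601.03891 — 2 statements merged into one kernel-verified Lean document; each statement's English description precedes it below -/
import Mathlib

section
/- For n ≡ 1 (mod 3), n ≥ 4, the stability of the strong domination number of the cycle C_n equals 1: deleting any single vertex changes γ_st from ⌈n/3⌉ to ⌈(n−1)/3⌉. -/
open SimpleGraph

/-- `D` is a strong dominating set of `G`: every vertex outside `D` has a neighbor
in `D` whose degree is at least its own. -/
def IsStrongDominating {V : Type*} (G : SimpleGraph V) (D : Set V) : Prop :=
  ∀ v ∉ D, ∃ u ∈ D, G.Adj v u ∧ (G.neighborSet v).ncard ≤ (G.neighborSet u).ncard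

/-- The strong domination number. -/
noncomputable def gammaSt {V : Type*} (G : SimpleGraph V) : ℕ :=
  sInf {n | ∃ D : Set V, D.Finite ∧ IsStrongDominating G D ∧ D.ncard = n}

/-- The stability of the strong domination number: the minimum size of a vertex set
whose removal changes the strong domination number. -/
noncomputable def stGammaSt {V : Type*} (G : SimpleGraph V) : ℕ :=
  sInf {n | ∃ S : Set V, S.Finite ∧ S.ncard = n ∧ gammaSt (G.induce Sᶜ) ≠ gammaSt G}

/-- The join of two graphs. -/
def joinG {V W : Type*} (G : SimpleGraph V) (H : SimpleGraph W) : SimpleGraph (V ⊕ W) :=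
  SimpleGraph.fromRel (fun x y =>
    match x, y with
    | Sum.inl a, Sum.inl b => G.Adj a b
    | Sum.inr a, Sum.inr b => H.Adj a b
    | _, _ => True)

/-- `n` disjoint copies of `K₂`. -/
def nK2 (n : ℕ) : SimpleGraph (Fin n × Fin 2) where
  Adj x y := x.1 = y.1 ∧ x.2 ≠ y.2
  symm := ⟨fun x y h => ⟨h.1.symm, h.2.symm⟩⟩
  loopless := ⟨fun x h => h.2 rfl⟩

/-!
A strong dominating set in a graph of maximum degree `2` covers at most three vertices per
member, so `γ_st(C_{3k+1}) ≥ k + 1` and `γ_st(P_{3k}) ≥ k`. Conversely `C_{3k+1} - v ≅ P_{3k}`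
is strongly dominated by its `k` vertices `≡ 1 (mod 3)`, all interior and hence of maximal
degree, and adding `v` to such a set strongly dominates the `2`-regular cycle. Thus deleting any
one vertex drops `γ_st` from `k + 1` to `k`, while deleting none changes nothing.
-/

lemma Fin.val_succ_sub_succ_eq_one {m : ℕ} {a b : Fin m} :
    ((a.succ - b.succ : Fin (m + 1)) : ℕ) = 1 ↔ a.val = b.val + 1 := by
  rcases le_or_gt b a with h | h
  · rw [Fin.coe_sub_iff_le.mpr (Fin.succ_le_succ_iff.mpr h), Fin.val_succ, Fin.val_succ]
    omega
  · rw [Fin.coe_sub_iff_lt.mpr (Fin.succ_lt_succ_iff.mpr h), Fin.val_succ, Fin.val_succ]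
    omega

namespace SimpleGraph

variable {V W : Type*} {G : SimpleGraph V} {H : SimpleGraph W}

lemma Iso.ncard_neighborSet (e : G ≃g H) (v : V) :
    (H.neighborSet (e v)).ncard = (G.neighborSet v).ncard := by
  rw [← Nat.card_coe_set_eq, ← Nat.card_coe_set_eq]
  exact Nat.card_congr (e.mapNeighborSet v).symm

lemma IsStrongDominating.image {D : Set V} (hD : IsStrongDominating G D) (e : G ≃g H) :
    IsStrongDominating H (e '' D) := by
  intro w hw
  obtain ⟨u, hu, hadj, hdeg⟩ := hD (e.symm w) fun h => hw ⟨_, h, e.apply_symm_apply w⟩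
  refine ⟨e u, Set.mem_image_of_mem e hu, ?_, ?_⟩
  · simpa using e.map_adj_iff.mpr hadj
  · have hw := e.ncard_neighborSet (e.symm w)
    rw [e.apply_symm_apply] at hw
    rwa [e.ncard_neighborSet, hw]

lemma Iso.gammaSt_eq (e : G ≃g H) : gammaSt G = gammaSt H := by
  refine congrArg sInf (Set.ext fun m => ⟨?_, ?_⟩)
  · rintro ⟨D, hfin, hD, rfl⟩
    exact ⟨e '' D, hfin.image e, hD.image e, Set.ncard_image_of_injective D e.injective⟩
  · rintro ⟨D, hfin, hD, rfl⟩
    exact ⟨e.symm '' D, hfin.image e.symm, hD.image e.symm,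
      Set.ncard_image_of_injective D e.symm.injective⟩

lemma gammaSt_le_ncard {D : Set V} (hfin : D.Finite) (hD : IsStrongDominating G D) :
    gammaSt G ≤ D.ncard :=
  Nat.sInf_le ⟨D, hfin, hD, rfl⟩

lemma exists_isStrongDominating_ncard_eq_gammaSt [Finite V] (G : SimpleGraph V) :
    ∃ D : Set V, IsStrongDominating G D ∧ D.ncard = gammaSt G := by
  obtain ⟨D, -, hD, hcard⟩ := Nat.sInf_mem (s := {n | ∃ D : Set V, D.Finite ∧
    IsStrongDominating G D ∧ D.ncard = n}) ⟨_, Set.univ, Set.toFinite _,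
      fun v hv => absurd (Set.mem_univ v) hv, rfl⟩
  exact ⟨D, hD, hcard⟩

lemma IsStrongDominating.of_dominating {D : Set V} (hdom : ∀ v ∉ D, ∃ u ∈ D, G.Adj v u)
    (hdeg : ∀ v, ∀ u ∈ D, (G.neighborSet v).ncard ≤ (G.neighborSet u).ncard) :
    IsStrongDominating G D := by
  intro v hv
  obtain ⟨u, hu, hadj⟩ := hdom v hv
  exact ⟨u, hu, hadj, hdeg v u hu⟩

lemma card_le_mul_gammaSt [Finite V] {d : ℕ} (hdeg : ∀ v, (G.neighborSet v).ncard ≤ d) :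
    Nat.card V ≤ (d + 1) * gammaSt G := by
  obtain ⟨D, hD, hcard⟩ := exists_isStrongDominating_ncard_eq_gammaSt G
  have hfin : D.Finite := Set.toFinite D
  have hcover : Set.univ ⊆ ⋃ u ∈ hfin.toFinset, insert u (G.neighborSet u) := by
    intro v _
    by_cases hv : v ∈ D
    · exact Set.mem_biUnion (hfin.mem_toFinset.mpr hv) (Set.mem_insert v _)
    · obtain ⟨u, hu, hadj, -⟩ := hD v hv
      exact Set.mem_biUnion (hfin.mem_toFinset.mpr hu) (Set.mem_insert_of_mem u hadj.symm)
  calc Nat.card V = (Set.univ : Set V).ncard := (Set.ncard_univ V).symm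
    _ ≤ (⋃ u ∈ hfin.toFinset, insert u (G.neighborSet u)).ncard := Set.ncard_le_ncard hcover
    _ ≤ ∑ u ∈ hfin.toFinset, (insert u (G.neighborSet u)).ncard :=
        Finset.set_ncard_biUnion_le _ _
    _ ≤ ∑ _u ∈ hfin.toFinset, (d + 1) :=
        Finset.sum_le_sum fun u _ =>
          (Set.ncard_insert_le u _).trans (Nat.add_le_add_right (hdeg u) 1)
    _ = (d + 1) * gammaSt G := by
        rw [Finset.sum_const, smul_eq_mul, ← Set.ncard_eq_toFinset_card D hfin, hcard, mul_comm]

lemma gammaSt_le_gammaSt_induce_compl_singleton_add_one [Finite V]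
    (hreg : ∀ u w, (G.neighborSet u).ncard = (G.neighborSet w).ncard) (v : V) :
    gammaSt G ≤ gammaSt (G.induce {v}ᶜ) + 1 := by
  obtain ⟨D, hD, hcard⟩ := exists_isStrongDominating_ncard_eq_gammaSt (G.induce {v}ᶜ)
  have hD' : IsStrongDominating G (insert v (Subtype.val '' D)) := by
    refine .of_dominating (fun w hw => ?_) fun u w _ => (hreg u w).le
    have hwv : w ∈ ({v}ᶜ : Set V) := fun h => hw (Or.inl h)
    obtain ⟨u, hu, hadj, -⟩ := hD ⟨w, hwv⟩ fun h => hw (Set.mem_insert_of_mem _ ⟨_, h, rfl⟩)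
    exact ⟨u, Set.mem_insert_of_mem _ ⟨u, hu, rfl⟩, hadj⟩
  calc gammaSt G ≤ (insert v (Subtype.val '' D)).ncard := gammaSt_le_ncard (Set.toFinite _) hD'
    _ ≤ (Subtype.val '' D).ncard + 1 := Set.ncard_insert_le _ _
    _ = gammaSt (G.induce {v}ᶜ) + 1 := by
        rw [Set.ncard_image_of_injective D Subtype.val_injective, hcard]

lemma stGammaSt_eq_one_of_gammaSt_induce_ne {v : V}
    (hv : gammaSt (G.induce {v}ᶜ) ≠ gammaSt G) : stGammaSt G = 1 := by
  have hone : 1 ∈ {n | ∃ S : Set V, S.Finite ∧ S.ncard = n ∧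
      gammaSt (G.induce Sᶜ) ≠ gammaSt G} :=
    ⟨{v}, Set.finite_singleton v, Set.ncard_singleton v, hv⟩
  unfold stGammaSt
  refine le_antisymm (Nat.sInf_le hone) (Nat.one_le_iff_ne_zero.mpr fun h => ?_)
  obtain ⟨S, hfin, hcard, hS⟩ := h ▸ Nat.sInf_mem ⟨1, hone⟩
  rw [(Set.ncard_eq_zero hfin).mp hcard, Set.compl_empty] at hS
  exact hS (induceUnivIso G).gammaSt_eq

lemma ncard_neighborSet_cycleGraph {n : ℕ} (hn : 3 ≤ n) (v : Fin n) :
    ((cycleGraph n).neighborSet v).ncard = 2 := by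
  obtain ⟨m, rfl⟩ := Nat.exists_eq_add_of_le' hn
  rw [← Nat.card_coe_set_eq, Nat.card_eq_fintype_card, card_neighborSet_eq_degree,
    cycleGraph_degree_three_le]

lemma ncard_neighborSet_pathGraph_le {n : ℕ} (v : Fin n) :
    ((pathGraph n).neighborSet v).ncard ≤ 2 := by
  by_cases hn : 3 ≤ n
  · rw [← ncard_neighborSet_cycleGraph hn v]
    exact Set.ncard_le_ncard fun w hw => pathGraph_le_cycleGraph hw
  · calc ((pathGraph n).neighborSet v).ncard ≤ Nat.card (Fin n) := Set.ncard_le_card _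
      _ ≤ 2 := by rw [Nat.card_fin]; omega

lemma two_le_ncard_neighborSet_pathGraph {n : ℕ} {v : Fin n} (hpos : 0 < v.val)
    (hlt : v.val + 1 < n) : 2 ≤ ((pathGraph n).neighborSet v).ncard := by
  have hpair :
      ({⟨v - 1, by omega⟩, ⟨v + 1, hlt⟩} : Set (Fin n)) ⊆ (pathGraph n).neighborSet v := by
    simp only [Set.insert_subset_iff, Set.singleton_subset_iff, mem_neighborSet, pathGraph_adj,
      true_or, and_true]
    omega
  calc 2 = ({⟨v - 1, by omega⟩, ⟨v + 1, hlt⟩} : Set (Fin n)).ncard :=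
        (Set.ncard_pair (by simp [Fin.ext_iff])).symm
    _ ≤ _ := Set.ncard_le_ncard hpair

lemma gammaSt_pathGraph_three_mul (k : ℕ) : gammaSt (pathGraph (3 * k)) = k := by
  refine le_antisymm ?_ ?_
  · set f : Fin k → Fin (3 * k) := fun i => ⟨3 * i + 1, by omega⟩
    have hf : f.Injective := fun i j h => by simpa [f, Fin.ext_iff] using h
    have hD : IsStrongDominating (pathGraph (3 * k)) (Set.range f) := by
      refine .of_dominating (fun v hv => ?_) ?_
      · have hv1 : v.val % 3 ≠ 1 := fun h =>
          hv ⟨⟨v / 3, by omega⟩, by simp [f, Fin.ext_iff]; omega⟩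
        exact ⟨f ⟨v / 3, by omega⟩, ⟨_, rfl⟩, by simp only [f, pathGraph_adj]; omega⟩
      · rintro v _ ⟨i, rfl⟩
        exact (ncard_neighborSet_pathGraph_le v).trans
          (two_le_ncard_neighborSet_pathGraph (by simp [f]) (by simp [f]; omega))
    calc gammaSt (pathGraph (3 * k)) ≤ (Set.range f).ncard :=
          gammaSt_le_ncard (Set.toFinite _) hD
      _ = k := by rw [Set.ncard_range_of_injective hf, Nat.card_fin]
  · have := card_le_mul_gammaSt (ncard_neighborSet_pathGraph_le (n := 3 * k))
    rw [Nat.card_fin] at this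
    omega

lemma cycleGraph_adj_add_right {n : ℕ} [NeZero n] {a b : Fin n} (v : Fin n) :
    (cycleGraph n).Adj (a + v) (b + v) ↔ (cycleGraph n).Adj a b := by
  rw [cycleGraph_adj', cycleGraph_adj', add_sub_add_right_eq_sub, add_sub_add_right_eq_sub]

lemma cycleGraph_adj_succ {m : ℕ} {i j : Fin m} :
    (cycleGraph (m + 1)).Adj i.succ j.succ ↔ (pathGraph m).Adj i j := by
  rw [cycleGraph_adj', pathGraph_adj, Fin.val_succ_sub_succ_eq_one, Fin.val_succ_sub_succ_eq_one]
  omega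

def pathGraphIsoInduceComplSingleton {m : ℕ} (v : Fin (m + 1)) :
    pathGraph m ≃g (cycleGraph (m + 1)).induce {v}ᶜ where
  toEquiv := (finSuccAboveEquiv 0).trans
    (Equiv.subtypeEquiv (Equiv.addRight v) fun a => by simp)
  map_rel_iff' {i j} := by
    change (cycleGraph (m + 1)).Adj (i.succ + v) (j.succ + v) ↔ _
    rw [cycleGraph_adj_add_right, cycleGraph_adj_succ]

lemma gammaSt_induce_compl_singleton_cycleGraph (k : ℕ) (v : Fin (3 * k + 1)) :
    gammaSt ((cycleGraph (3 * k + 1)).induce {v}ᶜ) = k :=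
  (pathGraphIsoInduceComplSingleton v).gammaSt_eq.symm.trans (gammaSt_pathGraph_three_mul k)

lemma gammaSt_cycleGraph_three_mul_add_one {k : ℕ} (hk : 1 ≤ k) :
    gammaSt (cycleGraph (3 * k + 1)) = k + 1 := by
  have hdeg := ncard_neighborSet_cycleGraph (n := 3 * k + 1) (by omega)
  refine le_antisymm ?_ ?_
  · have := gammaSt_le_gammaSt_induce_compl_singleton_add_one
      (fun u w => (hdeg u).trans (hdeg w).symm) 0
    rwa [gammaSt_induce_compl_singleton_cycleGraph] at this
  · have := card_le_mul_gammaSt fun v => (hdeg v).le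
    rw [Nat.card_fin] at this
    omega

end SimpleGraph

theorem stGammaSt_cycleGraph_one (n : ℕ) (hn : 4 ≤ n) (hmod : n % 3 = 1) :
    stGammaSt (cycleGraph n) = 1 ∧
    gammaSt (cycleGraph n) = (n + 2) / 3 ∧
    ∀ v : Fin n, gammaSt ((cycleGraph n).induce {v}ᶜ) = (n - 1 + 2) / 3 := by
  obtain ⟨k, rfl⟩ : ∃ k, n = 3 * k + 1 := ⟨n / 3, by omega⟩
  have hcycle := gammaSt_cycleGraph_three_mul_add_one (k := k) (by omega)
  have hdelete := gammaSt_induce_compl_singleton_cycleGraph k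
  refine ⟨stGammaSt_eq_one_of_gammaSt_induce_ne (v := 0) ?_, by omega,
    fun v => by rw [hdelete]; omega⟩
  rw [hcycle, hdelete]
  omega
end

section
/- For n ≥ 2, the friendship graph F_n (n triangles sharing a common vertex) satisfies γ_st(F_n) = 1, and removing the central vertex yields n disjoint edges with γ_st(nK_2) = n; hence st_{γ_st}(F_n) = 1. -/
open SimpleGraph

/-! The centre of `F_n` has degree `2n ≥ 2` and every other vertex has degree `2`, so the centre
alone is a strong dominating set and `γ_st(F_n) = 1`. Deleting the centre leaves `nK₂`, where all
degrees are `1` and a strong dominating set must meet every edge, so `γ_st(nK₂) = n ≠ 1`. Deleting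
no vertex cannot change `γ_st`, hence `st_{γ_st}(F_n) = 1`. -/

section StrongDomination

variable {V W : Type*} {G : SimpleGraph V} {H : SimpleGraph W}

lemma ncard_neighborSet_congr (e : G ≃g H) (v : V) :
    (G.neighborSet v).ncard = (H.neighborSet (e v)).ncard := by
  rw [← Nat.card_coe_set_eq, ← Nat.card_coe_set_eq]
  exact Nat.card_congr (e.mapNeighborSet v)

lemma IsStrongDominating.image_iso {D : Set V} (hD : IsStrongDominating G D) (e : G ≃g H) :
    IsStrongDominating H (e '' D) := by
  intro w hw
  obtain ⟨u, hu, hadj, hdeg⟩ := hD (e.symm w) fun h => hw ⟨e.symm w, h, by simp⟩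
  refine ⟨e u, Set.mem_image_of_mem e hu, by simpa using e.map_adj_iff.2 hadj, ?_⟩
  rwa [ncard_neighborSet_congr e.symm w, ← ncard_neighborSet_congr e u]

lemma gammaSt_congr (e : G ≃g H) : gammaSt G = gammaSt H := by
  unfold gammaSt
  congr 1
  ext k
  constructor
  · rintro ⟨D, hfin, hD, rfl⟩
    exact ⟨e '' D, hfin.image e, hD.image_iso e, Set.ncard_image_of_injective D e.injective⟩
  · rintro ⟨D, hfin, hD, rfl⟩
    exact ⟨e.symm '' D, hfin.image e.symm, hD.image_iso e.symm,
      Set.ncard_image_of_injective D e.symm.injective⟩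

lemma gammaSt_eq_ncard {D : Set V} (hfin : D.Finite) (hD : IsStrongDominating G D)
    (hmin : ∀ D' : Set V, D'.Finite → IsStrongDominating G D' → D.ncard ≤ D'.ncard) :
    gammaSt G = D.ncard :=
  le_antisymm (Nat.sInf_le ⟨D, hfin, hD, rfl⟩) <|
    le_csInf ⟨_, D, hfin, hD, rfl⟩ fun _ ⟨D', hfin', hD', h⟩ => h ▸ hmin D' hfin' hD'

lemma IsStrongDominating.nonempty [Nonempty V] {D : Set V} (hD : IsStrongDominating G D) :
    D.Nonempty := by
  obtain ⟨v⟩ := ‹Nonempty V›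
  by_cases hv : v ∈ D
  · exact ⟨v, hv⟩
  · obtain ⟨u, hu, -⟩ := hD v hv
    exact ⟨u, hu⟩

lemma gammaSt_eq_one {v : V} (hv : IsStrongDominating G {v}) : gammaSt G = 1 := by
  have : Nonempty V := ⟨v⟩
  rw [gammaSt_eq_ncard (Set.finite_singleton v) hv, Set.ncard_singleton]
  intro D hfin hD
  rw [Set.ncard_singleton, Nat.one_le_iff_ne_zero, Ne, Set.ncard_eq_zero hfin]
  exact hD.nonempty.ne_empty

lemma stGammaSt_eq_one {v : V} (hv : gammaSt (G.induce {v}ᶜ) ≠ gammaSt G) :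
    stGammaSt G = 1 := by
  have hmem : 1 ∈ {n | ∃ S : Set V, S.Finite ∧ S.ncard = n ∧
      gammaSt (G.induce Sᶜ) ≠ gammaSt G} :=
    ⟨{v}, Set.finite_singleton v, Set.ncard_singleton v, hv⟩
  have hzero : 0 ∉ {n | ∃ S : Set V, S.Finite ∧ S.ncard = n ∧
      gammaSt (G.induce Sᶜ) ≠ gammaSt G} := by
    rintro ⟨S, hfin, hS, hne⟩
    rw [(Set.ncard_eq_zero hfin).1 hS, Set.compl_empty] at hne
    exact hne (gammaSt_congr (induceUnivIso G))
  have hpos : stGammaSt G ≠ 0 := fun h =>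
    (Nat.sInf_eq_zero.1 h).elim hzero (Set.nonempty_of_mem hmem).ne_empty
  have hle : stGammaSt G ≤ 1 := Nat.sInf_le hmem
  omega

end StrongDomination

section Join

variable {V W : Type*} {G : SimpleGraph V} {H : SimpleGraph W}

lemma joinG_adj_inl_inl {a b : V} : (joinG G H).Adj (.inl a) (.inl b) ↔ G.Adj a b := by
  simpa [joinG, G.adj_comm b a] using G.ne_of_adj

lemma joinG_adj_inr_inr {a b : W} : (joinG G H).Adj (.inr a) (.inr b) ↔ H.Adj a b := by
  simpa [joinG, H.adj_comm b a] using H.ne_of_adj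

lemma joinG_adj_inl_inr (a : V) (b : W) : (joinG G H).Adj (.inl a) (.inr b) := by
  simp [joinG]

def joinG.inrEmbedding : H ↪g joinG G H where
  toEmbedding := .inr
  map_rel_iff' := joinG_adj_inr_inr

lemma joinG_neighborSet_inl (a : V) :
    (joinG G H).neighborSet (.inl a) = .inl '' G.neighborSet a ∪ Set.range .inr := by
  ext (x | x) <;> simp [joinG_adj_inl_inl, joinG_adj_inl_inr]

lemma joinG_neighborSet_inr (b : W) :
    (joinG G H).neighborSet (.inr b) = Set.range .inl ∪ .inr '' H.neighborSet b := by
  ext (x | x) <;> simp [joinG_adj_inr_inr, (joinG_adj_inl_inr _ _).symm]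

lemma ncard_joinG_neighborSet_inl [Finite V] [Finite W] (a : V) :
    ((joinG G H).neighborSet (.inl a)).ncard = (G.neighborSet a).ncard + Nat.card W := by
  rw [joinG_neighborSet_inl, Set.ncard_union_eq Set.disjoint_image_inl_range_inr,
    Set.ncard_image_of_injective _ Sum.inl_injective,
    Set.ncard_range_of_injective Sum.inr_injective]

lemma ncard_joinG_neighborSet_inr [Finite V] [Finite W] (b : W) :
    ((joinG G H).neighborSet (.inr b)).ncard = Nat.card V + (H.neighborSet b).ncard := by
  rw [joinG_neighborSet_inr, Set.ncard_union_eq Set.disjoint_range_inl_image_inr,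
    Set.ncard_image_of_injective _ Sum.inr_injective,
    Set.ncard_range_of_injective Sum.inl_injective]

end Join

section DisjointEdges

variable {n : ℕ}

lemma nK2_neighborSet (p : Fin n × Fin 2) : (nK2 n).neighborSet p = {(p.1, 1 - p.2)} := by
  ext ⟨i, j⟩
  have hfin2 : ∀ a b : Fin 2, a ≠ b ↔ b = 1 - a := by decide
  simp only [mem_neighborSet, Set.mem_singleton_iff, Prod.mk.injEq, ← hfin2]
  exact ⟨fun ⟨hi, hj⟩ => ⟨hi.symm, hj⟩, fun ⟨hi, hj⟩ => ⟨hi.symm, hj⟩⟩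

lemma ncard_nK2_neighborSet (p : Fin n × Fin 2) : ((nK2 n).neighborSet p).ncard = 1 := by
  rw [nK2_neighborSet, Set.ncard_singleton]

lemma isStrongDominating_nK2 : IsStrongDominating (nK2 n) (Set.range fun i => (i, 0)) := by
  rintro ⟨i, j⟩ hp
  have hj : (0 : Fin 2) ≠ j := fun h => hp ⟨i, by rw [h]⟩
  exact ⟨(i, 0), ⟨i, rfl⟩, ⟨rfl, hj.symm⟩, by rw [ncard_nK2_neighborSet, ncard_nK2_neighborSet]⟩

lemma gammaSt_nK2 : gammaSt (nK2 n) = n := by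
  have hrange : (Set.range fun i : Fin n => (i, (0 : Fin 2))).ncard = n := by
    rw [Set.ncard_range_of_injective fun i i' h => congrArg Prod.fst h, Nat.card_fin]
  refine (gammaSt_eq_ncard (Set.finite_range _) isStrongDominating_nK2 fun D hfin hD => ?_).trans
    hrange
  rw [hrange]
  have hcover : Prod.fst '' D = Set.univ := by
    refine Set.eq_univ_of_forall fun i => ?_
    by_cases hi : (i, (0 : Fin 2)) ∈ D
    · exact ⟨_, hi, rfl⟩
    · obtain ⟨u, hu, hadj, -⟩ := hD _ hi
      exact ⟨u, hu, hadj.1.symm⟩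
  calc n = (Prod.fst '' D).ncard := by rw [hcover, Set.ncard_univ, Nat.card_fin]
    _ ≤ D.ncard := Set.ncard_image_le hfin

end DisjointEdges

abbrev friendshipGraph (n : ℕ) : SimpleGraph (Unit ⊕ (Fin n × Fin 2)) := joinG ⊥ (nK2 n)

section Friendship

variable {n : ℕ}

lemma isStrongDominating_friendshipGraph_center (hn : 1 ≤ n) :
    IsStrongDominating (friendshipGraph n) {.inl ()} := by
  rintro (⟨⟩ | p) hp
  · exact absurd rfl hp
  · refine ⟨.inl (), rfl, (joinG_adj_inl_inr () p).symm, ?_⟩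
    rw [ncard_joinG_neighborSet_inr, ncard_joinG_neighborSet_inl, ncard_nK2_neighborSet]
    simp only [neighborSet_bot, Set.ncard_empty, Nat.card_unique, Nat.card_prod, Nat.card_fin]
    omega

lemma gammaSt_friendshipGraph_induce_compl_center :
    gammaSt ((friendshipGraph n).induce {.inl ()}ᶜ) = n := by
  have hleaves : ({.inl ()}ᶜ : Set (Unit ⊕ (Fin n × Fin 2))) = Set.range .inr := by
    rw [← Set.compl_range_inl, Set.range_unique]
  rw [hleaves]
  exact (gammaSt_congr joinG.inrEmbedding.isoInduceRange).symm.trans gammaSt_nK2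

end Friendship

theorem stGammaSt_friendship_one (n : ℕ) (hn : 2 ≤ n) :
    gammaSt (joinG (⊥ : SimpleGraph Unit) (nK2 n)) = 1 ∧
    gammaSt ((joinG (⊥ : SimpleGraph Unit) (nK2 n)).induce {Sum.inl ()}ᶜ) = n ∧
    stGammaSt (joinG (⊥ : SimpleGraph Unit) (nK2 n)) = 1 := by
  have hcenter := gammaSt_eq_one (isStrongDominating_friendshipGraph_center (n := n) (by omega))
  have hleaves := gammaSt_friendshipGraph_induce_compl_center (n := n)
  exact ⟨hcenter, hleaves, stGammaSt_eq_one (v := .inl ()) (by rw [hleaves, hcenter]; omega)⟩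
end
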